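/- Let A ∈ ℝ^{m×n}, let Θ ∈ ℝ^{n×n} be a diagonal matrix with strictly positive diagonal entries, and let M be the symmetric (n+m)×(n+m) block matrix M = [[−Θ^{-1}, Aᵀ],[A, 0]]. If λ ≠ 0 is an eigenvalue of M and x = (x₁, x₂) with x₁ ∈ ℝⁿ, x₂ ∈ ℝᵐ is a corresponding eigenvector with ‖x‖ = 1, then ‖x₂‖ ≤ ‖A‖ / √(λ² + ‖A‖²). -/

import Mathlib

/-!
The second block row of `M x = λ x` reads `A x₁ = λ x₂`, so `|λ| ‖x₂‖ ≤ ‖A‖ ‖x₁‖`, and with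
`‖x₁‖² + ‖x₂‖² = 1` this gives `‖x₂‖² (λ² + ‖A‖²) ≤ ‖A‖²`. The spectral norm, defined through the
largest eigenvalue of `A Aᵀ`, is the `ℓ²` operator norm: the spectral radius of a self-adjoint
operator is its norm, and `‖A Aᵀ‖ = ‖A‖²` is the C⋆-identity.
-/

open Matrix

/-- Euclidean norm of a real vector. -/
noncomputable def vecEnorm {ι : Type*} [Fintype ι] (x : ι → ℝ) : ℝ :=
  Real.sqrt (∑ i, (x i) ^ 2)

/-- Spectral norm (largest singular value) of a real matrix. -/
noncomputable def specNorm {m n : ℕ} (A : Matrix (Fin m) (Fin n) ℝ) : ℝ :=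
  Real.sqrt (⨆ i, (Matrix.isHermitian_mul_conjTranspose_self A).eigenvalues i)

open scoped Matrix.Norms.L2Operator ComplexOrder

theorem Matrix.PosSemidef.iSup_eigenvalues_eq_l2_opNorm {𝕜 n : Type*} [RCLike 𝕜] [Fintype n]
    [DecidableEq n] {H : Matrix n n 𝕜} (hH : H.PosSemidef) : ⨆ i, hH.1.eigenvalues i = ‖H‖ := by
  set T := toEuclideanCLM (n := n) (𝕜 := 𝕜) H
  have hspec : spectrum 𝕜 T = RCLike.ofReal '' Set.range hH.1.eigenvalues := by
    rw [AlgEquiv.spectrum_eq, hH.1.spectrum_eq_image_range]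
  have hrad : spectralRadius 𝕜 T = ‖T‖₊ :=
    T.spectralRadius_eq_nnnorm (hH.1.isSelfAdjoint.map _)
  have hL : 0 ≤ ⨆ i, hH.1.eigenvalues i := Real.iSup_nonneg hH.eigenvalues_nonneg
  refine le_antisymm (Real.iSup_le (fun i => ?_) (norm_nonneg _)) ?_
  · have : ‖(hH.1.eigenvalues i : 𝕜)‖₊ ≤ ‖T‖₊ := by
      rw [← ENNReal.coe_le_coe, ← hrad]
      exact le_biSup (fun k : 𝕜 => (‖k‖₊ : ENNReal)) (hspec ▸ ⟨_, Set.mem_range_self i, rfl⟩)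
    rw [← NNReal.coe_le_coe, coe_nnnorm, coe_nnnorm, RCLike.norm_ofReal] at this
    exact (le_abs_self _).trans this
  · rw [← l2_opNorm_toEuclideanCLM, ← ENNReal.ofReal_le_ofReal_iff hL, ofReal_norm,
      enorm_eq_nnnorm, ← hrad, spectralRadius, hspec]
    refine iSup₂_le ?_
    rintro _ ⟨_, ⟨i, rfl⟩, rfl⟩
    rw [← enorm_eq_nnnorm, ← ofReal_norm, ENNReal.ofReal_le_ofReal_iff hL, RCLike.norm_ofReal,
      abs_of_nonneg (hH.eigenvalues_nonneg i)]
    exact le_ciSup (Set.finite_range _).bddAbove i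

theorem Matrix.l2_opNorm_mul_conjTranspose_self {𝕜 m n : Type*} [RCLike 𝕜] [Fintype m]
    [Fintype n] [DecidableEq m] [DecidableEq n] (A : Matrix m n 𝕜) : ‖A * Aᴴ‖ = ‖A‖ * ‖A‖ := by
  simpa only [conjTranspose_conjTranspose, l2_opNorm_conjTranspose] using
    l2_opNorm_conjTranspose_mul_self Aᴴ

theorem specNorm_eq_l2_opNorm {m n : ℕ} (A : Matrix (Fin m) (Fin n) ℝ) : specNorm A = ‖A‖ := by
  rw [specNorm, (posSemidef_self_mul_conjTranspose A).iSup_eigenvalues_eq_l2_opNorm,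
    l2_opNorm_mul_conjTranspose_self, Real.sqrt_mul_self (norm_nonneg A)]

section vecEnorm

variable {ι : Type*} [Fintype ι]

theorem vecEnorm_eq_norm (x : ι → ℝ) : vecEnorm x = ‖WithLp.toLp 2 x‖ := by
  simp [vecEnorm, EuclideanSpace.norm_eq]

theorem sq_vecEnorm (x : ι → ℝ) : vecEnorm x ^ 2 = ∑ i, x i ^ 2 :=
  Real.sq_sqrt (Finset.sum_nonneg fun i _ => sq_nonneg (x i))

theorem vecEnorm_smul (c : ℝ) (x : ι → ℝ) : vecEnorm (c • x) = |c| * vecEnorm x := by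
  rw [vecEnorm_eq_norm, vecEnorm_eq_norm, WithLp.toLp_smul, norm_smul, Real.norm_eq_abs]

theorem sq_vecEnorm_sum {κ : Type*} [Fintype κ] (x : ι ⊕ κ → ℝ) :
    vecEnorm x ^ 2 = vecEnorm (x ∘ Sum.inl) ^ 2 + vecEnorm (x ∘ Sum.inr) ^ 2 := by
  simp only [sq_vecEnorm, Fintype.sum_sum_type, Function.comp_apply]

theorem vecEnorm_mulVec_le [DecidableEq ι] {κ : Type*} [Fintype κ] (A : Matrix κ ι ℝ)
    (x : ι → ℝ) : vecEnorm (A *ᵥ x) ≤ ‖A‖ * vecEnorm x := by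
  rw [vecEnorm_eq_norm, vecEnorm_eq_norm]
  exact l2_opNorm_mulVec A (WithLp.toLp 2 x)

end vecEnorm

theorem le_div_sqrt_of_abs_mul_le {l s a b : ℝ} (hl : l ≠ 0) (hs : 0 ≤ s) (hb : 0 ≤ b)
    (hab : a ^ 2 + b ^ 2 ≤ 1) (h : |l| * b ≤ s * a) : b ≤ s / √(l ^ 2 + s ^ 2) := by
  have hpos : 0 < l ^ 2 + s ^ 2 := by positivity
  have ht := Real.sq_sqrt hpos.le
  have hsq : (|l| * b) ^ 2 ≤ (s * a) ^ 2 := pow_le_pow_left₀ (by positivity) h 2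
  rw [mul_pow, mul_pow, sq_abs] at hsq
  rw [le_div_iff₀ (Real.sqrt_pos.mpr hpos)]
  nlinarith [Real.sqrt_nonneg (l ^ 2 + s ^ 2), sq_nonneg a]

theorem stmt_0 {m n : ℕ} (A : Matrix (Fin m) (Fin n) ℝ)
    (d : Fin n → ℝ)
    (M : Matrix (Fin n ⊕ Fin m) (Fin n ⊕ Fin m) ℝ)
    (hMdef : M = Matrix.fromBlocks (-(Matrix.diagonal d)⁻¹) Aᵀ A 0)
    (lam : ℝ) (hlam : lam ≠ 0)
    (x : Fin n ⊕ Fin m → ℝ)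
    (heig : M.mulVec x = lam • x)
    (hxnorm : vecEnorm x = 1) :
    vecEnorm (x ∘ Sum.inr) ≤ specNorm A / Real.sqrt (lam ^ 2 + specNorm A ^ 2) := by
  have hblock : A *ᵥ (x ∘ Sum.inl) = lam • (x ∘ Sum.inr) := by
    funext j
    simpa [hMdef, fromBlocks_mulVec] using congrFun heig (Sum.inr j)
  have hbound : |lam| * vecEnorm (x ∘ Sum.inr) ≤ specNorm A * vecEnorm (x ∘ Sum.inl) := by
    rw [← vecEnorm_smul, ← hblock, specNorm_eq_l2_opNorm]
    exact vecEnorm_mulVec_le A _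
  refine le_div_sqrt_of_abs_mul_le hlam (Real.sqrt_nonneg _) (Real.sqrt_nonneg _) ?_ hbound
  rw [← sq_vecEnorm_sum, hxnorm, one_pow]
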